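/- arXiv:2510.24710 — 3 statements merged into one kernel-verified Lean document; each statement's English description precedes it below -/
import Mathlib

section
/- Let g : ℝ^n → ℝ be μ-strongly convex and f : ℝ^n → ℝ be convex differentiable with ‖∇f(y)‖ ≤ L for all y, and let Y ⊆ ℝ^n be nonempty, closed, convex. Let y* be the minimizer of g over Y and y*_δ the minimizer of δ·f + g over Y (δ > 0). Then ‖y*_δ − y*‖ ≤ 2δL/μ. -/
open Set

/-- If `g` is `μ`-strongly convex, `f` is convex and differentiable with gradient bounded
by `L`, and `Y` is nonempty, closed, convex, then the minimizer `y*_δ` of `δ f + g` over `Y`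
satisfies `‖y*_δ − y*‖ ≤ 2δL/μ`, where `y*` minimizes `g` over `Y`. -/
theorem stmt0 {n : ℕ} (μ L δ : ℝ) (hμ : 0 < μ) (hL : 0 ≤ L) (hδ : 0 < δ)
    (g f : EuclideanSpace ℝ (Fin n) → ℝ)
    (f' : EuclideanSpace ℝ (Fin n) → EuclideanSpace ℝ (Fin n))
    (hg : StrongConvexOn univ μ g)
    (hf : ConvexOn ℝ univ f)
    (hf' : ∀ y, HasGradientAt f (f' y) y)
    (hf'b : ∀ y, ‖f' y‖ ≤ L)
    (Y : Set (EuclideanSpace ℝ (Fin n)))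
    (hYne : Y.Nonempty) (hYcl : IsClosed Y) (hYcv : Convex ℝ Y)
    (ystar ydelta : EuclideanSpace ℝ (Fin n))
    (hystar : ystar ∈ Y) (hystarmin : IsMinOn g Y ystar)
    (hydelta : ydelta ∈ Y)
    (hydeltamin : IsMinOn (fun y => δ * f y + g y) Y ydelta) :
    ‖ydelta - ystar‖ ≤ 2 * δ * L / μ := by
  set d : ℝ := ‖ydelta - ystar‖ with hd
  have hd0 : 0 ≤ d := norm_nonneg _
  -- Lipschitz estimate for f
  have hlip : f ystar - f ydelta ≤ L * d := by
    have := Convex.norm_image_sub_le_of_norm_hasFDerivWithin_le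
      (f := f) (f' := fun x => InnerProductSpace.toDual ℝ _ (f' x)) (C := L)
      (fun x _ => (hf' x).hasFDerivAt.hasFDerivWithinAt)
      (fun x _ => by simpa using hf'b x) (convex_univ) (mem_univ ydelta) (mem_univ ystar)
    calc f ystar - f ydelta ≤ ‖f ystar - f ydelta‖ := le_abs_self _
      _ ≤ L * ‖ystar - ydelta‖ := this
      _ = L * d := by rw [hd, norm_sub_rev]
  -- midpoint
  set m : EuclideanSpace ℝ (Fin n) := (1/2 : ℝ) • ystar + (1/2 : ℝ) • ydelta with hm
  have hmY : m ∈ Y := hYcv hystar hydelta (by norm_num) (by norm_num) (by norm_num)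
  have hA : g m ≤ (1/2) * g ystar + (1/2) * g ydelta - (1/2) * (1/2) * (μ/2 * ‖ystar - ydelta‖^2) := by
    have := hg.2 (mem_univ ystar) (mem_univ ydelta) (by norm_num : (0:ℝ) ≤ 1/2)
      (by norm_num : (0:ℝ) ≤ 1/2) (by norm_num : (1/2:ℝ) + 1/2 = 1)
    simpa [hm, smul_eq_mul, one_div] using this
  have hA' : g m ≤ (1/2) * g ystar + (1/2) * g ydelta - μ/8 * d^2 := by
    rw [hd, norm_sub_rev]; linarith [hA]
  have hB : f m ≤ (1/2) * f ystar + (1/2) * f ydelta := by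
    have := hf.2 (mem_univ ystar) (mem_univ ydelta) (by norm_num : (0:ℝ) ≤ 1/2)
      (by norm_num : (0:ℝ) ≤ 1/2) (by norm_num : (1/2:ℝ) + 1/2 = 1)
    simpa [hm, smul_eq_mul, one_div] using this
  have hC : g ystar ≤ g m := hystarmin hmY
  have hD : δ * f ydelta + g ydelta ≤ δ * f m + g m := hydeltamin hmY
  -- combine
  have key : μ * d^2 ≤ 2 * δ * L * d := by nlinarith [mul_le_mul_of_nonneg_left hB (le_of_lt hδ)]
  rcases eq_or_lt_of_le hd0 with h0 | h0
  · rw [← h0]; positivity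
  · rw [le_div_iff₀ hμ]
    nlinarith
end

section
/- Let g : ℝ^n → ℝ be μ-strongly convex over a nonempty closed convex set Y, let f : ℝ^n → ℝ be L-Lipschitz, and let δ > 0. Define y* = argmin_{y∈Y} g(y), y*_δ = argmin_{y∈Y} (δ f(y) + g(y)), Φ = f(y*), and Φ_δ = f(y*_δ) + (1/δ)(g(y*_δ) − g(y*)). Then 0 ≤ Φ − Φ_δ ≤ δL²/(2μ). -/
open Set

/-- If `g` is `μ`-strongly convex over nonempty closed convex `Y`, `f` is `L`-Lipschitz,
`δ > 0`, `y* = argmin_Y g`, `y*_δ = argmin_Y (δf + g)`, `Φ = f(y*)` and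
`Φ_δ = f(y*_δ) + (1/δ)(g(y*_δ) − g(y*))`, then `0 ≤ Φ − Φ_δ ≤ δL²/(2μ)`. -/
theorem stmt1 {n : ℕ} (μ L δ : ℝ) (hμ : 0 < μ) (hL : 0 ≤ L) (hδ : 0 < δ)
    (g f : EuclideanSpace ℝ (Fin n) → ℝ)
    (hg : StrongConvexOn univ μ g) (hgc : Continuous g)
    (hfL : ∀ y₁ y₂, |f y₁ - f y₂| ≤ L * ‖y₁ - y₂‖)
    (Y : Set (EuclideanSpace ℝ (Fin n)))
    (hYne : Y.Nonempty) (hYcl : IsClosed Y) (hYcv : Convex ℝ Y)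
    (ystar ydelta : EuclideanSpace ℝ (Fin n))
    (hystar : ystar ∈ Y) (hystarmin : IsMinOn g Y ystar)
    (hydelta : ydelta ∈ Y)
    (hydeltamin : IsMinOn (fun y => δ * f y + g y) Y ydelta) :
    0 ≤ f ystar - (f ydelta + (1 / δ) * (g ydelta - g ystar)) ∧
      f ystar - (f ydelta + (1 / δ) * (g ydelta - g ystar)) ≤ δ * L ^ 2 / (2 * μ) := by
  set r : ℝ := ‖ystar - ydelta‖ with hr
  have hr0 : 0 ≤ r := norm_nonneg _
  -- minimality of ydelta
  have h1 : δ * f ydelta + g ydelta ≤ δ * f ystar + g ystar := hydeltamin hystar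
  -- Lipschitz bound
  have hLip : f ystar - f ydelta ≤ L * r :=
    (le_abs_self _).trans (hfL ystar ydelta)
  -- strong convexity quadratic growth at the minimizer ystar
  have hsc : μ / 2 * r ^ 2 ≤ g ydelta - g ystar := by
    have key : ∀ t ∈ Set.Ioc (0 : ℝ) 1,
        (1 - t) * (μ / 2 * r ^ 2) ≤ g ydelta - g ystar := by
      rintro t ⟨ht0, ht1⟩
      have hconv := hg.2 (mem_univ ystar) (mem_univ ydelta)
        (by linarith : (0:ℝ) ≤ 1 - t) ht0.le (by ring)
      have hmem : (1 - t) • ystar + t • ydelta ∈ Y :=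
        hYcv hystar hydelta (by linarith) ht0.le (by ring)
      have hmin : g ystar ≤ g ((1 - t) • ystar + t • ydelta) := hystarmin hmem
      have : g ystar ≤ (1 - t) * g ystar + t * g ydelta
          - (1 - t) * t * (μ / 2 * r ^ 2) := by
        simpa [smul_eq_mul, hr] using hmin.trans hconv
      have ht : t * ((1 - t) * (μ / 2 * r ^ 2)) ≤ t * (g ydelta - g ystar) := by
        nlinarith
      exact le_of_mul_le_mul_left ht ht0
    have hten : Filter.Tendsto (fun t : ℝ => (1 - t) * (μ / 2 * r ^ 2))
        (nhdsWithin 0 (Set.Ioc 0 1)) (nhds (μ / 2 * r ^ 2)) := by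
      have : Filter.Tendsto (fun t : ℝ => (1 - t) * (μ / 2 * r ^ 2))
          (nhds 0) (nhds ((1 - 0) * (μ / 2 * r ^ 2))) := by
        exact ((continuous_const.sub continuous_id).mul continuous_const).tendsto 0
      simpa using this.mono_left nhdsWithin_le_nhds
    have hcl : (0 : ℝ) ∈ closure (Set.Ioc (0:ℝ) 1) := by
      rw [closure_Ioc (by norm_num : (0:ℝ) ≠ 1)]
      exact ⟨le_refl 0, by norm_num⟩
    have hne : (nhdsWithin (0:ℝ) (Set.Ioc 0 1)).NeBot :=
      mem_closure_iff_nhdsWithin_neBot.mp hcl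
    exact le_of_tendsto hten (eventually_nhdsWithin_of_forall key)
  have hδ0 : δ ≠ 0 := ne_of_gt hδ
  have hμ0 : μ ≠ 0 := ne_of_gt hμ
  constructor
  · have key : (1 / δ) * (g ydelta - g ystar) ≤ f ystar - f ydelta := by
      rw [one_div, inv_mul_le_iff₀ hδ]
      linarith
    linarith
  · have h2 : (1 / δ) * (μ / 2 * r ^ 2) ≤ (1 / δ) * (g ydelta - g ystar) :=
      mul_le_mul_of_nonneg_left hsc (by positivity)
    have h3 : L * r - (1 / δ) * (μ / 2 * r ^ 2) ≤ δ * L ^ 2 / (2 * μ) := by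
      rw [le_div_iff₀ (by positivity : (0:ℝ) < 2 * μ)]
      have hkey : 1 / δ * (μ / 2 * r ^ 2) * (2 * μ) * δ = μ ^ 2 * r ^ 2 := by
        field_simp
      nlinarith [sq_nonneg (μ * r - δ * L), hkey, hδ, mul_pos hδ hμ]
    linarith
end

section
/- (Error bound for projected gradient step.) Let f : ℝ^n → ℝ be l-smooth and μ-strongly convex, X ⊆ ℝ^n closed convex, x* = argmin_{x∈X} f(x), η ≤ 1/l, and x⁺ = Π_X(x − η∇f(x)). Then ‖x − x*‖ ≤ (2/(μη))‖x − x⁺‖. -/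
/-!
With `a = x - x*`, `b = x - x⁺` and `u = ∇f x - ∇f x*`, the obtuse-angle property of the
projection defining `x⁺` plus `η` times the variational inequality at `x*` give
`⟪b - η u, b - a⟫ ≤ 0`. Expanding, and using strong monotonicity `μ‖a‖² ≤ ⟪u, a⟫` of the
gradient together with `‖u‖ ≤ l‖a‖` and `η l ≤ 1`, yields `μ η ‖a‖² ≤ 2 ‖a‖ ‖b‖`.
-/

open Set InnerProductSpace

section

variable {E : Type*} [NormedAddCommGroup E] [NormedSpace ℝ E] {s : Set E} {g : E → ℝ}
  {g' : StrongDual ℝ E} {x y : E}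

theorem ConvexOn.apply_sub_le_sub_of_hasFDerivAt (hg : ConvexOn ℝ s g) (hx : x ∈ s) (hy : y ∈ s)
    (hg' : HasFDerivAt g g' x) : g' (y - x) ≤ g y - g x := by
  have hline : ConvexOn ℝ (AffineMap.lineMap (k := ℝ) x y ⁻¹' s)
      (g ∘ AffineMap.lineMap (k := ℝ) x y) :=
    hg.comp_affineMap _
  have hderiv : HasDerivAt (g ∘ AffineMap.lineMap (k := ℝ) x y) (g' (y - x)) 0 :=
    (by simpa using hg' : HasFDerivAt g g' (AffineMap.lineMap (k := ℝ) x y (0 : ℝ))).comp_hasDerivAt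
      0 AffineMap.hasDerivAt_lineMap
  simpa [slope_def_field] using
    hline.le_slope_of_hasDerivAt (by simpa using hx) (by simpa using hy) zero_lt_one hderiv

end

section

variable {F : Type*} [NormedAddCommGroup F] [InnerProductSpace ℝ F]
  {s : Set F} {f : F → ℝ} {x y a b u v : F} {μ l η : ℝ}

theorem real_inner_sub_sub_nonpos_of_forall_norm_sub_le (hs : Convex ℝ s) (ha : a ∈ s)
    (hmin : ∀ w ∈ s, ‖u - a‖ ≤ ‖u - w‖) (hy : y ∈ s) : ⟪u - a, y - a⟫_ℝ ≤ 0 := by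
  have : Nonempty s := ⟨⟨a, ha⟩⟩
  refine (norm_eq_iInf_iff_real_inner_le_zero hs ha).mp ?_ y hy
  exact le_antisymm (le_ciInf fun w ↦ hmin w w.2)
    (ciInf_le ⟨0, forall_mem_range.2 fun _ ↦ norm_nonneg _⟩ (⟨a, ha⟩ : s))

theorem norm_le_of_real_inner_sub_smul_sub_nonpos (hμ : 0 < μ) (hη : 0 < η) (hηl : η * l ≤ 1)
    (hmono : μ * ‖a‖ ^ 2 ≤ ⟪u, a⟫_ℝ) (hlip : ‖u‖ ≤ l * ‖a‖) (h : ⟪b - η • u, b - a⟫_ℝ ≤ 0) :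
    ‖a‖ ≤ 2 / (μ * η) * ‖b‖ := by
  have hexpand : ‖b‖ ^ 2 + η * ⟪u, a⟫_ℝ ≤ ⟪b, a⟫_ℝ + η * ⟪u, b⟫_ℝ := by
    simp only [inner_sub_left, inner_sub_right, real_inner_smul_left,
      real_inner_self_eq_norm_sq] at h
    linarith
  have hsq : μ * η * ‖a‖ * ‖a‖ ≤ 2 * ‖b‖ * ‖a‖ :=
    calc μ * η * ‖a‖ * ‖a‖ = η * (μ * ‖a‖ ^ 2) := by ring
      _ ≤ η * ⟪u, a⟫_ℝ := by gcongr
      _ ≤ ⟪b, a⟫_ℝ + η * ⟪u, b⟫_ℝ := by nlinarith [sq_nonneg ‖b‖]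
      _ ≤ ‖b‖ * ‖a‖ + η * (‖u‖ * ‖b‖) := by gcongr <;> exact real_inner_le_norm _ _
      _ ≤ ‖b‖ * ‖a‖ + η * l * (‖b‖ * ‖a‖) := by
        nlinarith [mul_le_mul_of_nonneg_right hlip (norm_nonneg b)]
      _ ≤ 2 * ‖b‖ * ‖a‖ := by nlinarith [mul_nonneg (norm_nonneg b) (norm_nonneg a)]
  rw [div_mul_eq_mul_div, le_div_iff₀ (mul_pos hμ hη)]
  rcases (norm_nonneg a).eq_or_lt with ha | ha
  · rw [← ha, zero_mul]
    positivity
  · linarith [le_of_mul_le_mul_right hsq ha]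

variable [CompleteSpace F]

theorem StrongConvexOn.mul_norm_sub_sq_le_inner_sub (hf : StrongConvexOn s μ f) (hx : x ∈ s)
    (hy : y ∈ s) (hfx : HasGradientAt f u x) (hfy : HasGradientAt f v y) :
    μ * ‖x - y‖ ^ 2 ≤ ⟪u - v, x - y⟫_ℝ := by
  have hconv := strongConvexOn_iff_convex.mp hf
  have hderiv {z w : F} (hz : HasGradientAt f w z) :=
    hz.hasFDerivAt.sub ((hasStrictFDerivAt_norm_sq z).hasFDerivAt.const_mul (μ / 2))
  have hxy := hconv.apply_sub_le_sub_of_hasFDerivAt hx hy (hderiv hfx)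
  have hyx := hconv.apply_sub_le_sub_of_hasFDerivAt hy hx (hderiv hfy)
  simp only [sub_apply, toDual_apply_apply, smul_apply, innerSL_apply_apply, smul_eq_mul,
    nsmul_eq_mul] at hxy hyx
  have hsq : ‖x - y‖ ^ 2 = -(⟪x, y - x⟫_ℝ + ⟪y, x - y⟫_ℝ) := by
    rw [← real_inner_self_eq_norm_sq]
    simp only [inner_sub_left, inner_sub_right, real_inner_comm]
    ring
  have hflip : ⟪u, y - x⟫_ℝ = -⟪u, x - y⟫_ℝ := by rw [← inner_neg_right, neg_sub]
  rw [inner_sub_left, hsq]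
  linarith

theorem IsMinOn.inner_sub_nonneg_of_hasGradientAt (hmin : IsMinOn f s a) (hs : Convex ℝ s)
    (ha : a ∈ s) (hf : HasGradientAt f u a) (hy : y ∈ s) : 0 ≤ ⟪u, y - a⟫_ℝ := by
  simpa using hmin.localize.hasFDerivWithinAt_nonneg hf.hasFDerivAt.hasFDerivWithinAt
    (sub_mem_posTangentConeAt_of_segment_subset (hs.segment_subset ha hy))

end

theorem stmt4_general {n : ℕ} (l μ η : ℝ) (hμ : 0 < μ) (hη : 0 < η) (hηl : η ≤ 1 / l)
    (f : EuclideanSpace ℝ (Fin n) → ℝ)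
    (f' : EuclideanSpace ℝ (Fin n) → EuclideanSpace ℝ (Fin n))
    (hf' : ∀ x, HasGradientAt f (f' x) x)
    (hsmooth : ∀ x₁ x₂, ‖f' x₁ - f' x₂‖ ≤ l * ‖x₁ - x₂‖)
    (hsc : StrongConvexOn univ μ f)
    (X : Set (EuclideanSpace ℝ (Fin n)))
    (hXcv : Convex ℝ X)
    (xstar : EuclideanSpace ℝ (Fin n)) (hxstar : xstar ∈ X) (hxstarmin : IsMinOn f X xstar)
    (x xplus : EuclideanSpace ℝ (Fin n)) (hxplus : xplus ∈ X)
    (hproj : ∀ w ∈ X, ‖x - η • f' x - xplus‖ ≤ ‖x - η • f' x - w‖) :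
    ‖x - xstar‖ ≤ 2 / (μ * η) * ‖x - xplus‖ := by
  have hl : 0 < l := one_div_pos.mp (hη.trans_le hηl)
  have hηl' : η * l ≤ 1 := (le_div_iff₀ hl).mp hηl
  have hmono := hsc.mul_norm_sub_sq_le_inner_sub (mem_univ x) (mem_univ xstar) (hf' x) (hf' xstar)
  have hobtuse := real_inner_sub_sub_nonpos_of_forall_norm_sub_le hXcv hxplus hproj hxstar
  have hopt := hxstarmin.inner_sub_nonneg_of_hasGradientAt hXcv hxstar (hf' xstar) hxplus
  refine norm_le_of_real_inner_sub_smul_sub_nonpos hμ hη hηl' hmono (hsmooth x xstar) ?_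
  have hvec : x - xplus - η • (f' x - f' xstar) = x - η • f' x - xplus + η • f' xstar := by
    module
  have hdir : x - xplus - (x - xstar) = xstar - xplus := by abel
  have hflip : ⟪f' xstar, xstar - xplus⟫_ℝ = -⟪f' xstar, xplus - xstar⟫_ℝ := by
    rw [← inner_neg_right, neg_sub]
  rw [hvec, hdir, inner_add_left, real_inner_smul_left, hflip]
  nlinarith [mul_nonneg hη.le hopt]

/-- Error bound for a projected gradient step: if `f` is `l`-smooth and `μ`-strongly convex,
`X` closed convex, `x* = argmin_X f`, `η ≤ 1/l`, and `x⁺ = Π_X(x − η∇f(x))`, then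
`‖x − x*‖ ≤ (2/(μη))‖x − x⁺‖`. -/
theorem stmt4 {n : ℕ} (l μ η : ℝ) (hμ : 0 < μ) (hμl : μ ≤ l) (hη : 0 < η) (hηl : η ≤ 1 / l)
    (f : EuclideanSpace ℝ (Fin n) → ℝ)
    (f' : EuclideanSpace ℝ (Fin n) → EuclideanSpace ℝ (Fin n))
    (hf' : ∀ x, HasGradientAt f (f' x) x)
    (hsmooth : ∀ x₁ x₂, ‖f' x₁ - f' x₂‖ ≤ l * ‖x₁ - x₂‖)
    (hsc : StrongConvexOn univ μ f)
    (X : Set (EuclideanSpace ℝ (Fin n)))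
    (hXne : X.Nonempty) (hXcl : IsClosed X) (hXcv : Convex ℝ X)
    (xstar : EuclideanSpace ℝ (Fin n)) (hxstar : xstar ∈ X) (hxstarmin : IsMinOn f X xstar)
    (x xplus : EuclideanSpace ℝ (Fin n)) (hxplus : xplus ∈ X)
    (hproj : ∀ w ∈ X, ‖x - η • f' x - xplus‖ ≤ ‖x - η • f' x - w‖) :
    ‖x - xstar‖ ≤ 2 / (μ * η) * ‖x - xplus‖ :=
  stmt4_general l μ η hμ hη hηl f f' hf' hsmooth hsc X hXcv xstar hxstar hxstarmin x xplus hxplus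
    hproj
end
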